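/- Let U : ℝ^d → ℝ be differentiable and λ-strongly convex with λ > 0, and let x ∈ ℝ^d with ∇U(x) ≠ 0. For z ∼ N_d(0, I_d) and σ > 0, Pr(U(x) − U(x + σz) ≥ −λσ²d/4) ≤ 2[exp(−(σλd)²/(64‖∇U(x)‖²)) + exp(−d/32)]. -/

import Mathlib

open MeasureTheory ProbabilityTheory Real
open scoped ENNReal NNReal

noncomputable section

/-- The standard Gaussian measure `N_d(0, I_d)` on `ℝ^d` (Euclidean space). -/
def stdGaussian (d : ℕ) : Measure (EuclideanSpace ℝ (Fin d)) :=
  Measure.map (MeasurableEquiv.toLp 2 (Fin d → ℝ))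
    (Measure.pi fun _ : Fin d => gaussianReal 0 1)

section AuxConvex

variable {E : Type*} [NormedAddCommGroup E] [InnerProductSpace ℝ E] [CompleteSpace E]

lemma strong_convex_grad_ineq {U : E → ℝ} {lam : ℝ}
    (hdiff : Differentiable ℝ U)
    (hconv : ConvexOn ℝ Set.univ (fun y => U y - lam / 2 * ‖y‖ ^ 2))
    (x v : E) :
    U x + inner ℝ (gradient U x) v + lam / 2 * ‖v‖ ^ 2 ≤ U (x + v) := by
  set f : E → ℝ := fun y => U y - lam / 2 * ‖y‖ ^ 2 with hf
  set h : ℝ → ℝ := fun t => f (x + t • v) with hh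
  have hcomp : ConvexOn ℝ Set.univ h := by
    have h1 := hconv.comp_affineMap (AffineMap.lineMap x (x + v) : ℝ →ᵃ[ℝ] E)
    have h2 : (f ∘ (AffineMap.lineMap x (x + v) : ℝ →ᵃ[ℝ] E)) = h := by
      funext t
      simp [hh, AffineMap.lineMap_apply, add_sub_cancel_left, add_comm]
    rw [h2] at h1
    simpa using h1
  have hU : HasFDerivAt U ((InnerProductSpace.toDual ℝ E) (gradient U x)) x :=
    (hdiff x).hasGradientAt.hasFDerivAt
  have hq : HasFDerivAt (fun y : E => ‖y‖ ^ 2) (2 • (innerSL ℝ x)) x :=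
    (hasFDerivAt_id x).norm_sq
  have hfd : HasFDerivAt f ((InnerProductSpace.toDual ℝ E) (gradient U x)
      - (lam / 2) • (2 • (innerSL ℝ x))) x := by
    exact hU.sub (hq.const_mul (lam / 2))
  have hfd' : HasFDerivAt f ((InnerProductSpace.toDual ℝ E) (gradient U x)
      - (lam / 2) • (2 • (innerSL ℝ x))) (x + (0:ℝ) • v) := by simpa using hfd
  have hline : HasDerivAt (fun t : ℝ => x + t • v) v 0 := by
    simpa using ((hasDerivAt_id (0:ℝ)).smul_const v).const_add x
  have hd : HasDerivAt h ((inner ℝ (gradient U x) v : ℝ) - lam * inner ℝ x v) 0 := by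
    have := hfd'.comp_hasDerivAt 0 hline
    refine this.congr_deriv ?_
    simp [InnerProductSpace.toDual_apply_apply, two_smul]
    ring
  have hslope := hcomp.le_slope_of_hasDerivAt (Set.mem_univ 0) (Set.mem_univ 1) zero_lt_one hd
  rw [slope_def_field] at hslope
  have h0 : h 0 = U x - lam / 2 * ‖x‖ ^ 2 := by simp [hh, hf]
  have h1 : h 1 = U (x + v) - lam / 2 * ‖x + v‖ ^ 2 := by simp [hh, hf]
  have hexp : ‖x + v‖ ^ 2 = ‖x‖ ^ 2 + 2 * inner ℝ x v + ‖v‖ ^ 2 := norm_add_sq_real x v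
  rw [h0, h1, hexp] at hslope
  simp at hslope
  have hg : (fderiv ℝ U x) v = inner ℝ (gradient U x) v := by
    rw [gradient, InnerProductSpace.toDual_symm_apply]
  linarith [hslope]

end AuxConvex

lemma log_one_add_lb {θ : ℝ} (hθ : 0 ≤ θ) : θ - θ^2/2 ≤ Real.log (1+θ) := by
  have key : ∀ t ∈ Set.Ici (0:ℝ), HasDerivAt (fun u => Real.log (1+u) - u + u^2/2)
      (1/(1+t) - 1 + t) t := by
    intro t ht
    have h1 : (0:ℝ) < 1 + t := by linarith [ht.out]
    have : HasDerivAt (fun u : ℝ => Real.log (1+u)) (1/(1+t)) t := by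
      have := (Real.hasDerivAt_log h1.ne').comp t ((hasDerivAt_id t).const_add 1)
      simpa [one_div, Function.comp_def] using this
    exact (this.sub (hasDerivAt_id' t)).add (by simpa using ((hasDerivAt_id' t).pow 2).div_const 2)
  have hmono : MonotoneOn (fun u => Real.log (1+u) - u + u^2/2) (Set.Ici (0:ℝ)) := by
    apply monotoneOn_of_deriv_nonneg (convex_Ici 0)
    · refine ((Real.continuousOn_log.comp (by fun_prop) ?_).sub continuousOn_id).add
        (by fun_prop)
      intro u hu
      simp only [Set.mem_compl_iff, Set.mem_singleton_iff]
      have : (0:ℝ) ≤ u := hu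
      positivity
    · intro t ht
      rw [interior_Ici] at ht
      exact ((key t (Set.mem_Ici.mpr (Set.mem_Ioi.mp ht).le)).differentiableAt).differentiableWithinAt
    · intro t ht
      rw [interior_Ici] at ht
      rw [(key t (Set.mem_Ici.mpr (Set.mem_Ioi.mp ht).le)).deriv]
      have h1 : (0:ℝ) < 1 + t := by linarith [ht.out]
      have : 1/(1+t) - 1 + t = t^2/(1+t) := by field_simp; ring
      rw [this]; positivity
  have := hmono (Set.mem_Ici.2 le_rfl) (Set.mem_Ici.2 hθ) hθ
  simp at this
  linarith [this]

lemma gauss_pdf_mul (A B : ℝ) (hB : 0 ≤ B) (w : ℝ) :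
    gaussianPDFReal 0 1 w * rexp (A*w - B*w^2)
      = ((Real.sqrt (2*π))⁻¹ * rexp (A^2/(4*(B+1/2)))) * rexp (-((B+1/2))*(w - A/(2*(B+1/2)))^2) := by
  have hp : (0:ℝ) < B + 1/2 := by linarith
  have hne : B + 1/2 ≠ 0 := ne_of_gt hp
  rw [gaussianPDFReal]
  push_cast
  rw [mul_one, mul_assoc, ← Real.exp_add, mul_assoc, ← Real.exp_add]
  congr 1
  congr 1
  field_simp
  ring

lemma gauss1d_withDensity : gaussianReal 0 1
    = MeasureTheory.Measure.withDensity volume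
        (fun x => ((Real.toNNReal (gaussianPDFReal 0 1 x) : ℝ≥0) : ℝ≥0∞)) := by
  rw [gaussianReal_of_var_ne_zero 0 one_ne_zero]
  rfl

lemma gauss1d_integrable (A B : ℝ) (hB : 0 ≤ B) :
    Integrable (fun w => rexp (A*w - B*w^2)) (gaussianReal 0 1) := by
  have hp : (0:ℝ) < B + 1/2 := by linarith
  rw [gauss1d_withDensity,
    integrable_withDensity_iff_integrable_smul ((measurable_gaussianPDFReal 0 1).real_toNNReal)]
  have : (fun w : ℝ => (Real.toNNReal (gaussianPDFReal 0 1 w) : ℝ≥0) • rexp (A*w - B*w^2))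
      = fun w => ((Real.sqrt (2*π))⁻¹ * rexp (A^2/(4*(B+1/2)))) *
          rexp (-((B+1/2))*(w - A/(2*(B+1/2)))^2) := by
    funext w
    rw [NNReal.smul_def, smul_eq_mul, Real.coe_toNNReal _ (gaussianPDFReal_nonneg 0 1 w),
      gauss_pdf_mul A B hB w]
  rw [this]
  exact ((integrable_exp_neg_mul_sq hp).comp_sub_right (A/(2*(B+1/2)))).const_mul _

lemma gauss1d (A B : ℝ) (hB : 0 ≤ B) :
    (∫ w, rexp (A*w - B*w^2) ∂(gaussianReal 0 1))
      = (Real.sqrt (1+2*B))⁻¹ * rexp (A^2/(2*(1+2*B))) := by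
  have hp : (0:ℝ) < B + 1/2 := by linarith
  rw [gauss1d_withDensity,
    integral_withDensity_eq_integral_smul ((measurable_gaussianPDFReal 0 1).real_toNNReal)]
  have h1 : (fun w : ℝ => (Real.toNNReal (gaussianPDFReal 0 1 w) : ℝ≥0) • rexp (A*w - B*w^2))
      = fun w => ((Real.sqrt (2*π))⁻¹ * rexp (A^2/(4*(B+1/2)))) *
          rexp (-((B+1/2))*(w - A/(2*(B+1/2)))^2) := by
    funext w
    rw [NNReal.smul_def, smul_eq_mul, Real.coe_toNNReal _ (gaussianPDFReal_nonneg 0 1 w),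
      gauss_pdf_mul A B hB w]
  rw [h1, integral_const_mul]
  have h2 : ∫ w : ℝ, rexp (-((B+1/2))*(w - A/(2*(B+1/2)))^2)
      = ∫ w : ℝ, rexp (-((B+1/2))*w^2) := by
    simp_rw [sub_eq_add_neg]
    exact integral_add_right_eq_self (fun y : ℝ => rexp (-((B+1/2))*y^2)) (-(A/(2*(B+1/2))))
  rw [h2, integral_gaussian]
  have h2p : (0:ℝ) < 2*(B+1/2) := by linarith
  have hππ : (0:ℝ) < π/(B+1/2) := by positivity
  have hsq : Real.sqrt (2*π) = Real.sqrt (2*(B+1/2)) * Real.sqrt (π/(B+1/2)) := by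
    rw [← Real.sqrt_mul h2p.le]
    congr 1
    field_simp
  have h3 : (Real.sqrt (2*π))⁻¹ * rexp (A^2/(4*(B+1/2))) * Real.sqrt (π/(B+1/2))
      = (Real.sqrt (2*(B+1/2)))⁻¹ * rexp (A^2/(4*(B+1/2))) := by
    rw [hsq, mul_inv]
    have : Real.sqrt (π/(B+1/2)) ≠ 0 := by positivity
    field_simp
  rw [h3]
  have h4 : (1:ℝ) + 2*B = 2*(B+1/2) := by ring
  rw [h4]
  congr 2
  ring

theorem my_integrable_prod {n : ℕ} {E : Type*} [MeasurableSpace E] (μ : Measure E)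
    [SigmaFinite μ] {f : Fin n → E → ℝ} (hf : ∀ i, Integrable (f i) μ) :
    Integrable (fun (x : Fin n → E) ↦ ∏ i, f i (x i)) (Measure.pi fun _ => μ) := by
  induction n with
  | zero => simp only [Finset.univ_eq_empty, Finset.prod_empty, integrable_const_iff,
      one_ne_zero, Measure.pi_empty_univ, ENNReal.one_lt_top, or_true]
            exact Or.inr ⟨by simp [Measure.pi_empty_univ]⟩
  | succ n n_ih =>
      have := ((measurePreserving_piFinSuccAbove (fun _ : Fin (n+1) => μ) 0).symm)
      rw [← this.integrable_comp_emb (MeasurableEquiv.measurableEmbedding _)]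
      simp_rw [MeasurableEquiv.piFinSuccAbove_symm_apply, Fin.insertNthEquiv,
        Fin.prod_univ_succ, Fin.insertNth_zero]
      simp only [Fin.zero_succAbove, Function.comp_def, Fin.cons_zero, Fin.cons_succ,
        Equiv.coe_fn_mk]
      have h2 : Integrable (fun (x : Fin n → E) ↦ ∏ j, f (Fin.succ j) (x j))
          (Measure.pi fun _ => μ) := n_ih (fun i ↦ hf _)
      exact Integrable.mul_prod (hf 0) h2

theorem my_integral_prod {n : ℕ} {E : Type*} [MeasurableSpace E] (μ : Measure E)
    [SigmaFinite μ] (f : Fin n → E → ℝ) :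
    ∫ x : Fin n → E, ∏ i, f i (x i) ∂(Measure.pi fun _ => μ) = ∏ i, ∫ x, f i x ∂μ := by
  induction n with
  | zero =>
      simp only [Finset.univ_eq_empty, Finset.prod_empty, integral_const,
        Measure.pi_empty_univ, measureReal_def, ENNReal.toReal_one, smul_eq_mul, mul_one, one_smul]
  | succ n n_ih =>
      calc
        _ = ∫ x : E × (Fin n → E),
            f 0 x.1 * ∏ i : Fin n, f (Fin.succ i) (x.2 i) ∂(μ.prod (Measure.pi fun _ => μ)) := by
          rw [← ((measurePreserving_piFinSuccAbove
            (fun _ : Fin (n+1) => μ) 0).symm).integral_comp']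
          simp [MeasurableEquiv.piFinSuccAbove_symm_apply, Fin.insertNthEquiv,
            Fin.prod_univ_succ, Fin.insertNth_zero, Fin.zero_succAbove]
        _ = (∫ x, f 0 x ∂μ) * ∏ i : Fin n, ∫ (x : E), f (Fin.succ i) x ∂μ := by
          rw [← n_ih, ← integral_prod_mul]
        _ = ∏ i, ∫ x, f i x ∂μ := by rw [Fin.prod_univ_succ]

set_option maxHeartbeats 1000000 in
lemma caseA_bound (lam σ G dd : ℝ) (hlam : 0 < lam) (hσ : 0 < σ) (hG : 0 < G) (hdd : 1 ≤ dd)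
    (hcase : (σ*lam*dd)^2 ≤ 2*G*dd) :
    lam*dd/(8*G)*(lam*σ^2*dd/4)
      + (lam*dd/(8*G)*σ)^2*G/(2*(1+lam*dd/(8*G)*lam*σ^2))
      - dd/2 * Real.log (1+lam*dd/(8*G)*lam*σ^2) ≤ -(σ*lam*dd)^2/(64*G) := by
  have hdd0 : (0:ℝ) < dd := by linarith
  have hθ0 : (0:ℝ) ≤ lam*dd/(8*G)*lam*σ^2 := by positivity
  have hlog := log_one_add_lb hθ0
  have hlog' : dd/2*(lam*dd/(8*G)*lam*σ^2 - (lam*dd/(8*G)*lam*σ^2)^2/2)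
      ≤ dd/2 * Real.log (1+lam*dd/(8*G)*lam*σ^2) :=
    mul_le_mul_of_nonneg_left hlog (by positivity)
  have hfrac : (lam*dd/(8*G)*σ)^2*G/(2*(1+lam*dd/(8*G)*lam*σ^2))
      ≤ (lam*dd/(8*G)*σ)^2*G/2 :=
    div_le_div_of_nonneg_left (by positivity) (by norm_num) (by linarith)
  have h1 := mul_le_mul_of_nonneg_left hcase (show (0:ℝ) ≤ lam^2*σ^2 by positivity)
  have h2 := mul_le_mul_of_nonneg_left h1 (show (0:ℝ) ≤ dd by linarith)
  have hP : lam^4*σ^4*dd^3 ≤ 2*G*(σ*lam*dd)^2 := by nlinarith [h2]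
  have hexpand : lam*dd/(8*G)*(lam*σ^2*dd/4) + (lam*dd/(8*G)*σ)^2*G/2
        - dd/2*(lam*dd/(8*G)*lam*σ^2 - (lam*dd/(8*G)*lam*σ^2)^2/2)
        + (σ*lam*dd)^2/(64*G)
      = (lam^4*σ^4*dd^3 - 2*G*(σ*lam*dd)^2)/(256*G^2) := by
    field_simp
    ring
  have hnum : (lam^4*σ^4*dd^3 - 2*G*(σ*lam*dd)^2)/(256*G^2) ≤ 0 :=
    div_nonpos_of_nonpos_of_nonneg (by linarith) (by positivity)
  rw [← hexpand] at hnum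
  rw [neg_div]
  linarith [hfrac, hlog', hnum]

set_option maxHeartbeats 1000000 in
lemma caseB_bound (lam σ G dd : ℝ) (hlam : 0 < lam) (hσ : 0 < σ) (hG : 0 < G) (hdd : 1 ≤ dd)
    (hcase : 2*G*dd < (σ*lam*dd)^2) :
    1/(4*lam*σ^2)*(lam*σ^2*dd/4)
      + (1/(4*lam*σ^2)*σ)^2*G/(2*(1+1/(4*lam*σ^2)*lam*σ^2))
      - dd/2 * Real.log (1+1/(4*lam*σ^2)*lam*σ^2) ≤ -dd/32 := by
  have hdd0 : (0:ℝ) < dd := by linarith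
  have hθeq : 1/(4*lam*σ^2)*lam*σ^2 = 1/4 := by field_simp
  rw [hθeq]
  have hcε : 1/(4*lam*σ^2)*(lam*σ^2*dd/4) = dd/16 := by field_simp; ring
  rw [hcε]
  have hGlt : G ≤ lam^2*σ^2*dd/2 := by nlinarith [hcase]
  have hquo : (1/(4*lam*σ^2)*σ)^2*G/(2*(1+(1/4:ℝ))) = G/(40*lam^2*σ^2) := by
    field_simp
    ring
  have hG2 : (1/(4*lam*σ^2)*σ)^2*G/(2*(1+(1/4:ℝ))) ≤ dd/80 := by
    rw [hquo, div_le_div_iff₀ (by positivity) (by norm_num)]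
    nlinarith [hGlt]
  have hlog := log_one_add_lb (show (0:ℝ) ≤ 1/4 by norm_num)
  have hlog' : dd/2 * (7/32 : ℝ) ≤ dd/2 * Real.log (1+1/4) := by
    apply mul_le_mul_of_nonneg_left _ (by positivity)
    calc (7/32 : ℝ) = 1/4 - (1/4:ℝ)^2/2 := by norm_num
      _ ≤ Real.log (1+1/4) := hlog
  linarith

set_option maxHeartbeats 1000000 in
/-- Gaussian tail bound on the event that the potential does not increase enough
along a Gaussian random-walk proposal, for a λ-strongly convex differentiable potential. -/
theorem potential_increase_tail_bound
    (d : ℕ) (hd : 1 ≤ d)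
    (U : EuclideanSpace ℝ (Fin d) → ℝ) (lam : ℝ) (hlam : 0 < lam)
    (hdiff : Differentiable ℝ U)
    (hconv : ConvexOn ℝ Set.univ (fun x => U x - lam / 2 * ‖x‖ ^ 2))
    (x : EuclideanSpace ℝ (Fin d)) (hx : gradient U x ≠ 0)
    (σ : ℝ) (hσ : 0 < σ) :
    (stdGaussian d) {z | U x - U (x + σ • z) ≥ -(lam * σ ^ 2 * d) / 4}
      ≤ ENNReal.ofReal
          (2 * (Real.exp (-(σ * lam * d) ^ 2 / (64 * ‖gradient U x‖ ^ 2))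
              + Real.exp (-(d : ℝ) / 32))) := by
  classical
  have hGpos : (0:ℝ) < ‖gradient U x‖ ^ 2 := by
    have := norm_pos_iff.mpr hx
    positivity
  set G : ℝ := ‖gradient U x‖ ^ 2 with hGdef
  set ν : Measure (Fin d → ℝ) := Measure.pi fun _ : Fin d => gaussianReal 0 1 with hν
  set e := (MeasurableEquiv.toLp 2 (Fin d → ℝ)).symm with he
  have hμdef : stdGaussian d = Measure.map e.symm ν := rfl
  haveI hprob : IsProbabilityMeasure (stdGaussian d) := by
    rw [hμdef]; exact Measure.isProbabilityMeasure_map e.symm.measurable.aemeasurable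
  set V : EuclideanSpace ℝ (Fin d) → ℝ :=
    fun z => σ * inner ℝ (gradient U x) z + lam * σ^2/2 * ‖z‖^2 with hV
  set ε : ℝ := lam * σ^2 * d / 4 with hε
  -- step 1 : event inclusion
  have hsub : {z : EuclideanSpace ℝ (Fin d) | U x - U (x + σ • z) ≥ -(lam * σ ^ 2 * d) / 4}
      ⊆ {z | V z ≤ ε} := by
    intro z hz
    simp only [Set.mem_setOf_eq] at hz ⊢
    have h1 := strong_convex_grad_ineq hdiff hconv x (σ • z)
    have h2 : (inner ℝ (gradient U x) (σ • z) : ℝ) = σ * inner ℝ (gradient U x) z :=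
      real_inner_smul_right _ _ _
    have h3 : ‖σ • z‖^2 = σ^2 * ‖z‖^2 := by
      rw [norm_smul, mul_pow, Real.norm_eq_abs, sq_abs]
    rw [h2, h3] at h1
    rw [hV, hε]
    simp only
    linarith [h1, hz]
  refine le_trans (measure_mono hsub) ?_
  -- step 2 : master Chernoff bound
  have master : ∀ c : ℝ, 0 ≤ c →
      ((stdGaussian d) {z | V z ≤ ε}).toReal ≤
        rexp (c*ε + (c*σ)^2*G/(2*(1+c*lam*σ^2)) - (d:ℝ)/2 * Real.log (1+c*lam*σ^2)) := by
    intro c hc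
    have hB0 : (0:ℝ) ≤ c*lam*σ^2/2 := by positivity
    have hθ0 : (0:ℝ) ≤ c*lam*σ^2 := by positivity
    have hθ1 : (0:ℝ) < 1 + c*lam*σ^2 := by linarith
    have hprodpt : ∀ w : Fin d → ℝ, rexp (-c * V (e.symm w))
        = ∏ i, rexp ((-(c*σ) * gradient U x i) * w i - (c*lam*σ^2/2) * (w i)^2) := by
      intro w
      rw [← Real.exp_sum]
      congr 1
      have hinner : (inner ℝ (gradient U x) (e.symm w) : ℝ) = ∑ i, gradient U x i * w i := by
        rw [PiLp.inner_apply]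
        simp [mul_comm]
        rfl
      have hnorm : ‖(e.symm w : EuclideanSpace ℝ (Fin d))‖^2 = ∑ i, (w i)^2 := by
        rw [← real_inner_self_eq_norm_sq, PiLp.inner_apply]
        congr 1
        funext i
        simp [sq]
        rfl
      have hsum : ∑ i, ((-(c*σ) * gradient U x i) * w i - (c*lam*σ^2/2) * (w i)^2)
          = (-(c*σ)) * (∑ i, gradient U x i * w i) - (c*lam*σ^2/2) * (∑ i, (w i)^2) := by
        rw [Finset.mul_sum, Finset.mul_sum, ← Finset.sum_sub_distrib]
        refine Finset.sum_congr rfl fun i _ => by ring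
      rw [hsum, hV]
      simp only
      rw [hinner, hnorm]
      ring
    have hint : Integrable (fun z => rexp (-c * V z)) (stdGaussian d) := by
      rw [hμdef, integrable_map_equiv]
      have hfe : ((fun z => rexp (-c * V z)) ∘ e.symm)
          = fun w : Fin d → ℝ =>
            ∏ i, rexp ((-(c*σ) * gradient U x i) * w i - (c*lam*σ^2/2) * (w i)^2) := by
        funext w
        exact hprodpt w
      rw [hfe, hν]
      exact my_integrable_prod _ (fun i => gauss1d_integrable _ _ hB0)
    have hch := measure_le_le_exp_mul_mgf (X := V) (μ := stdGaussian d) ε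
      (neg_nonpos.mpr hc) hint
    have hmgf : mgf V (stdGaussian d) (-c)
        = rexp ((c*σ)^2*G/(2*(1+c*lam*σ^2)) - (d:ℝ)/2 * Real.log (1+c*lam*σ^2)) := by
      have h0 : mgf V (stdGaussian d) (-c) = ∫ z, rexp (-c * V z) ∂(stdGaussian d) := rfl
      rw [h0, hμdef, integral_map_equiv]
      simp_rw [hprodpt]
      rw [hν, my_integral_prod (gaussianReal 0 1)
        (fun i (t : ℝ) => rexp ((-(c*σ) * gradient U x i) * t - (c*lam*σ^2/2) * t^2))]
      have heach : ∀ i : Fin d,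
          (∫ t : ℝ, rexp ((-(c*σ) * gradient U x i) * t - (c*lam*σ^2/2) * t^2)
              ∂(gaussianReal 0 1))
          = (Real.sqrt (1+c*lam*σ^2))⁻¹
              * rexp ((-(c*σ) * gradient U x i)^2/(2*(1+c*lam*σ^2))) := by
        intro i
        rw [gauss1d _ _ hB0]
        have : (1:ℝ) + 2*(c*lam*σ^2/2) = 1 + c*lam*σ^2 := by ring
        rw [this]
      simp_rw [heach]
      rw [Finset.prod_mul_distrib, Finset.prod_const, ← Real.exp_sum, Finset.card_univ,
        Fintype.card_fin]
      have hsumg : ∑ i, (-(c*σ) * gradient U x i)^2/(2*(1+c*lam*σ^2))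
          = (c*σ)^2*G/(2*(1+c*lam*σ^2)) := by
        rw [← Finset.sum_div]
        congr 1
        have hGsum : G = ∑ i, gradient U x i * gradient U x i := by
          rw [hGdef, ← real_inner_self_eq_norm_sq, PiLp.inner_apply]
          rfl
        rw [hGsum, Finset.mul_sum]
        refine Finset.sum_congr rfl fun i _ => by ring
      rw [hsumg]
      have hsqrt : (Real.sqrt (1+c*lam*σ^2))⁻¹ = rexp (-(Real.log (1+c*lam*σ^2)/2)) := by
        rw [show Real.sqrt (1+c*lam*σ^2) = rexp (Real.log (1+c*lam*σ^2)/2) by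
          rw [Real.sqrt_eq_rpow, Real.rpow_def_of_pos hθ1]; ring_nf]
        rw [← Real.exp_neg]
      rw [hsqrt, ← Real.exp_nat_mul, ← Real.exp_add]
      congr 1
      push_cast
      ring
    rw [hmgf, neg_neg, ← Real.exp_add] at hch
    convert hch using 2
    · rfl
    ring
  -- step 3 : case analysis
  have hfin : (stdGaussian d) {z | V z ≤ ε} ≠ ⊤ := measure_ne_top _ _
  have hd1 : (1:ℝ) ≤ (d:ℝ) := by exact_mod_cast hd
  have hXpos : (0:ℝ) < rexp (-(σ * lam * d) ^ 2 / (64 * G)) := Real.exp_pos _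
  have hYpos : (0:ℝ) < rexp (-(d:ℝ) / 32) := Real.exp_pos _
  rcases le_or_gt ((σ*lam*(d:ℝ))^2) (2*G*d) with hcase | hcase
  · -- case A
    have hc0 : (0:ℝ) ≤ lam*(d:ℝ)/(8*G) := by positivity
    have h := master (lam*(d:ℝ)/(8*G)) hc0
    rw [hε] at h
    have hbound := caseA_bound lam σ G d hlam hσ hGpos hd1 hcase
    have h2 : rexp (lam*(d:ℝ)/(8*G)*(lam*σ^2*(d:ℝ)/4)
          + (lam*(d:ℝ)/(8*G)*σ)^2*G/(2*(1+lam*(d:ℝ)/(8*G)*lam*σ^2))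
          - (d:ℝ)/2 * Real.log (1+lam*(d:ℝ)/(8*G)*lam*σ^2))
        ≤ rexp (-(σ*lam*(d:ℝ))^2/(64*G)) := Real.exp_le_exp.mpr hbound
    calc (stdGaussian d) {z | V z ≤ ε}
        = ENNReal.ofReal (((stdGaussian d) {z | V z ≤ ε}).toReal) :=
          (ENNReal.ofReal_toReal hfin).symm
      _ ≤ ENNReal.ofReal (2 * (rexp (-(σ * lam * d) ^ 2 / (64 * G)) + rexp (-(d:ℝ) / 32))) := by
          apply ENNReal.ofReal_le_ofReal
          linarith [h, h2]
  · -- case B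
    have hc0 : (0:ℝ) ≤ 1/(4*lam*σ^2) := by positivity
    have h := master (1/(4*lam*σ^2)) hc0
    rw [hε] at h
    have hbound := caseB_bound lam σ G d hlam hσ hGpos hd1 hcase
    have h2 : rexp (1/(4*lam*σ^2)*(lam*σ^2*(d:ℝ)/4)
          + (1/(4*lam*σ^2)*σ)^2*G/(2*(1+1/(4*lam*σ^2)*lam*σ^2))
          - (d:ℝ)/2 * Real.log (1+1/(4*lam*σ^2)*lam*σ^2))
        ≤ rexp (-(d:ℝ)/32) := Real.exp_le_exp.mpr hbound
    calc (stdGaussian d) {z | V z ≤ ε}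
        = ENNReal.ofReal (((stdGaussian d) {z | V z ≤ ε}).toReal) :=
          (ENNReal.ofReal_toReal hfin).symm
      _ ≤ ENNReal.ofReal (2 * (rexp (-(σ * lam * d) ^ 2 / (64 * G)) + rexp (-(d:ℝ) / 32))) := by
          apply ENNReal.ofReal_le_ofReal
          linarith [h, h2]
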